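/- Ultimate boundedness: every solution h of the forced ENSO model defined on a half-line [t₀ − τ₂, ∞) satisfies limsup_{t→∞} |h(t)| ≤ max(b₊, −b₋)·(b + c)/d, regardless of the parameters k₀, d_k, ω and of the initial history. -/

import Mathlib

/-! The delays enter only through `G`, which is bounded by `max b₊ (-b₋)`, so the equation reads
`h' = w - d h` with a forcing `|w| ≤ M := max b₊ (-b₋) (b + c)`. With the integrating factor
`e^{dt}`, both `(h - M/d) e^{dt}` and `(-h - M/d) e^{dt}` are antitone, hence
`|h t| ≤ M/d + O(e^{-dt})`. -/

open Filter Set Real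

theorem abs_mul_tanh_div_le (a x : ℝ) : |a * tanh (x / a)| ≤ |a| := by
  rw [abs_mul]
  exact mul_le_of_le_one_right (abs_nonneg a) (abs_tanh_lt_one _).le

theorem abs_piecewise_tanh_le {bp bm : ℝ} (hbp : 0 < bp) (hbm : bm < 0) (x : ℝ) :
    |if 0 ≤ x then bp * tanh (x / bp) else bm * tanh (x / bm)| ≤ max bp (-bm) := by
  split_ifs
  · exact (abs_mul_tanh_div_le bp x).trans ((abs_of_pos hbp).trans_le (le_max_left _ _))
  · exact (abs_mul_tanh_div_le bm x).trans ((abs_of_neg hbm).trans_le (le_max_right _ _))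

section LinearDamping

variable {f w : ℝ → ℝ} {s d M : ℝ}

theorem antitoneOn_sub_div_mul_exp (hd : d ≠ 0)
    (hf : ∀ t ∈ Ioi s, HasDerivAt f (w t - d * f t) t) (hw : ∀ t ∈ Ioi s, w t ≤ M) :
    AntitoneOn (fun t => (f t - M / d) * exp (d * t)) (Ioi s) := by
  have hderiv : ∀ t ∈ Ioi s, HasDerivAt (fun t => (f t - M / d) * exp (d * t))
      ((w t - M) * exp (d * t)) t := by
    intro t ht
    have hexp : HasDerivAt (fun t => exp (d * t)) (exp (d * t) * d) t := by
      simpa using ((hasDerivAt_id t).const_mul d).exp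
    refine (((hf t ht).sub_const (M / d)).mul hexp).congr_deriv ?_
    field_simp
    ring
  rw [← interior_Ioi] at hderiv
  refine antitoneOn_of_hasDerivWithinAt_nonpos (convex_Ioi s) ?_
    (fun t ht => (hderiv t ht).hasDerivWithinAt) fun t ht => ?_
  · exact fun t ht => (hderiv t (by rwa [interior_Ioi])).continuousAt.continuousWithinAt
  · rw [interior_Ioi] at ht
    exact mul_nonpos_of_nonpos_of_nonneg (sub_nonpos.2 (hw t ht)) (exp_pos _).le

theorem eventually_le_div_add_of_hasDerivAt (hd : 0 < d)
    (hf : ∀ t ∈ Ioi s, HasDerivAt f (w t - d * f t) t) (hw : ∀ t ∈ Ioi s, w t ≤ M)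
    {ε : ℝ} (hε : 0 < ε) : ∀ᶠ t in atTop, f t ≤ M / d + ε := by
  set a := s + 1
  set C := (f a - M / d) * exp (d * a)
  have hdecay : Tendsto (fun t => C * exp (-(d * t))) atTop (nhds 0) := by
    simpa using (tendsto_exp_neg_atTop_nhds_zero.comp
      (tendsto_id.const_mul_atTop hd)).const_mul C
  filter_upwards [eventually_ge_atTop a, hdecay.eventually (ge_mem_nhds hε)] with t hat hCt
  have hmono : (f t - M / d) * exp (d * t) ≤ C :=
    antitoneOn_sub_div_mul_exp hd.ne' hf hw (by simp [a]) (by simp only [mem_Ioi]; linarith) hat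
  have hbound : f t - M / d ≤ C * exp (-(d * t)) := by
    rw [exp_neg, ← div_eq_mul_inv, le_div_iff₀ (exp_pos _)]
    exact hmono
  linarith

theorem limsup_abs_le_div_of_hasDerivAt (hd : 0 < d)
    (hf : ∀ t ∈ Ioi s, HasDerivAt f (w t - d * f t) t) (hw : ∀ t ∈ Ioi s, |w t| ≤ M) :
    limsup (fun t => |f t|) atTop ≤ M / d := by
  have hneg : ∀ t ∈ Ioi s, HasDerivAt (-f) (-w t - d * (-f) t) t :=
    fun t ht => (hf t ht).neg.congr_deriv (by rw [Pi.neg_apply]; ring)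
  refine le_of_forall_pos_le_add fun ε hε => limsup_le_of_le ?_ ?_
  · exact isCoboundedUnder_le_of_le atTop fun t => abs_nonneg (f t)
  · filter_upwards [eventually_le_div_add_of_hasDerivAt hd hf
      (fun t ht => (le_abs_self _).trans (hw t ht)) hε,
      eventually_le_div_add_of_hasDerivAt hd hneg
      (fun t ht => (neg_le_abs _).trans (hw t ht)) hε] with t hup hlow
    exact abs_le.2 ⟨by rw [Pi.neg_apply] at hlow; linarith, hup⟩

end LinearDamping

theorem enso_ultimate_boundedness_general (b c d τ₁ τ₂ bp bm t₀ : ℝ)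
    (hb : 0 < b) (hc : 0 < c) (hd : 0 < d)
    (hbp : 0 < bp) (hbm : bm < 0)
    (G : ℝ → ℝ)
    (hG : ∀ x : ℝ, G x =
      if 0 ≤ x then bp * Real.tanh (x / bp) else bm * Real.tanh (x / bm))
    (κ : ℝ → ℝ)
    (h : ℝ → ℝ)
    (hde : ∀ t : ℝ, t₀ < t → HasDerivAt h
      (b * G (κ (t - τ₁) * h (t - τ₁)) - c * G (κ (t - τ₂) * h (t - τ₂))
        - d * h t) t) :
    Filter.limsup (fun t => |h t|) Filter.atTop ≤ max bp (-bm) * (b + c) / d := by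
  have hG_le : ∀ x, |G x| ≤ max bp (-bm) := fun x => hG x ▸ abs_piecewise_tanh_le hbp hbm x
  refine limsup_abs_le_div_of_hasDerivAt hd (s := t₀) hde fun t _ => ?_
  calc |b * G (κ (t - τ₁) * h (t - τ₁)) - c * G (κ (t - τ₂) * h (t - τ₂))|
      ≤ b * |G (κ (t - τ₁) * h (t - τ₁))| + c * |G (κ (t - τ₂) * h (t - τ₂))| :=
        (abs_sub _ _).trans_eq (by rw [abs_mul, abs_mul, abs_of_pos hb, abs_of_pos hc])
    _ ≤ b * max bp (-bm) + c * max bp (-bm) := by gcongr <;> exact hG_le _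
    _ = max bp (-bm) * (b + c) := by ring

/-- Ultimate boundedness: every solution `h` of the forced ENSO model defined
on a half-line `[t₀−τ₂, ∞)` satisfies
`limsup_{t→∞} |h(t)| ≤ max(b₊, −b₋)·(b+c)/d`, regardless of `k₀, d_k, ω`
and of the initial history. -/
theorem enso_ultimate_boundedness (b c d τ₁ τ₂ bp bm k₀ dk ω t₀ : ℝ)
    (hb : 0 < b) (hc : 0 < c) (hd : 0 < d) (hτ₁ : 0 < τ₁) (hτ₂ : 0 < τ₂)
    (hbp : 0 < bp) (hbm : bm < 0)
    (G : ℝ → ℝ)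
    (hG : ∀ x : ℝ, G x =
      if 0 ≤ x then bp * Real.tanh (x / bp) else bm * Real.tanh (x / bm))
    (κ : ℝ → ℝ) (hκ : ∀ t : ℝ, κ t = k₀ + dk * Real.sin (ω * t))
    (h : ℝ → ℝ) (hcont : ContinuousOn h (Set.Ici (t₀ - τ₂)))
    (hde : ∀ t : ℝ, t₀ < t → HasDerivAt h
      (b * G (κ (t - τ₁) * h (t - τ₁)) - c * G (κ (t - τ₂) * h (t - τ₂))
        - d * h t) t) :
    Filter.limsup (fun t => |h t|) Filter.atTop ≤ max bp (-bm) * (b + c) / d :=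
  enso_ultimate_boundedness_general b c d τ₁ τ₂ bp bm t₀ hb hc hd hbp hbm G hG κ h hde
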